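/- For the broadcast channel with Y₁ = BSC(p)(X) and Y₂ = BEC(e)(X), p ∈ (0,1/2), if H(p) < e ≤ 1 then for every Markov chain V → X → (Y₁,Y₂) with X uniform on {0,1}, I(V;Y₁) ≥ I(V;Y₂). -/

import Mathlib

/-!
With `X` uniform, both informations split over the values `v` of `V`. Writing
`r = P(V = v)`, `α = P(X = 0 | V = v)` and `α ∗ p = α(1 - p) + (1 - α)p`, the erasure
channel contributes `(1 - e) · r · (1 - H(α))` (an erasure carries no information) and the
symmetric channel `r · (1 - H(α ∗ p))`. Since `e ≥ H(p)`, it suffices that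
`(1 - H(p))(1 - H(α)) ≤ 1 - H(α ∗ p)`. With `α = (1 - δ)/2` and `p = (1 - ε)/2` we have
`α ∗ p = (1 - δε)/2`, and `1 - H((1 - δ)/2)` is a power series `∑ cₘ (δ²)^(m+1)`
with `cₘ ≥ 0` and `∑ cₘ ≤ 1`; the inequality is then Chebyshev's sum inequality for the
similarly ordered sequences `(δ²)^(m+1)` and `(ε²)^(m+1)`.
-/

open Real

/-- Mutual information (in bits) of a joint pmf `q` on a product of finite alphabets,
with the conventions `log 0 = 0`, `x / 0 = 0`. -/
noncomputable def mutualInfo {A B : Type*} [Fintype A] [Fintype B] (q : A → B → ℝ) : ℝ :=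
  ∑ a, ∑ b, q a b * Real.logb 2 (q a b / ((∑ b', q a b') * (∑ a', q a' b)))

/-- Conditional mutual information `I(A;B|U)` (in bits) of a joint pmf `r` on `U × A × B`. -/
noncomputable def condMutualInfo {U A B : Type*} [Fintype U] [Fintype A] [Fintype B]
    (r : U → A → B → ℝ) : ℝ :=
  ∑ u, ∑ a, ∑ b, r u a b *
    Real.logb 2 ((r u a b * (∑ a', ∑ b', r u a' b')) / ((∑ b', r u a b') * (∑ a', r u a' b)))

/-- Binary entropy function (base 2). -/
noncomputable def binH (t : ℝ) : ℝ := -(t * Real.logb 2 t) - (1 - t) * Real.logb 2 (1 - t)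

/-- BSC(p) transition matrix. -/
noncomputable def bscCh (p : ℝ) : Fin 2 → Fin 2 → ℝ := fun x y => if x = y then 1 - p else p

/-- BEC(e) transition matrix; output `2` is the erasure symbol. -/
noncomputable def becCh (e : ℝ) : Fin 2 → Fin 3 → ℝ := fun x y =>
  if (y : ℕ) = 2 then e else if (y : ℕ) = (x : ℕ) then 1 - e else 0

open Finset

lemma Monovary.sum_mul_sum_le_sum_mul_sum {ι R : Type*} [CommRing R] [LinearOrder R]
    [IsStrictOrderedRing R] {c x y : ι → R} (hxy : Monovary x y) (s : Finset ι)
    (hc : ∀ i ∈ s, 0 ≤ c i) :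
    (∑ i ∈ s, c i * x i) * (∑ i ∈ s, c i * y i)
      ≤ (∑ i ∈ s, c i) * (∑ i ∈ s, c i * (x i * y i)) := by
  have hpairs : 0 ≤ ∑ i ∈ s, ∑ j ∈ s, c i * c j * ((x j - x i) * (y j - y i)) :=
    sum_nonneg fun i hi => sum_nonneg fun j hj =>
      mul_nonneg (mul_nonneg (hc i hi) (hc j hj)) (hxy.sub_mul_sub_nonneg i j)
  have hexpand : ∑ i ∈ s, ∑ j ∈ s, c i * c j * ((x j - x i) * (y j - y i))
      = 2 * ((∑ i ∈ s, c i) * (∑ i ∈ s, c i * (x i * y i))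
        - (∑ i ∈ s, c i * x i) * (∑ i ∈ s, c i * y i)) := by
    calc _ = ∑ i ∈ s, ∑ j ∈ s, (c i * (c j * (x j * y j)) + c j * (c i * (x i * y i))
          - c i * x i * (c j * y j) - c j * x j * (c i * y i)) :=
          sum_congr rfl fun i _ => sum_congr rfl fun j _ => by ring
      _ = _ := by
          simp only [sum_sub_distrib, sum_add_distrib, ← mul_sum, ← sum_mul]
          ring
  linarith

lemma binH_eq_binEntropy_div (t : ℝ) : binH t = binEntropy t / log 2 := by
  simp only [binH, binEntropy, logb, log_inv]
  ring

lemma binH_nonneg {t : ℝ} (h₀ : 0 ≤ t) (h₁ : t ≤ 1) : 0 ≤ binH t := by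
  rw [binH_eq_binEntropy_div]
  exact div_nonneg (binEntropy_nonneg h₀ h₁) (log_nonneg one_le_two)

lemma binH_le_one (t : ℝ) : binH t ≤ 1 := by
  rw [binH_eq_binEntropy_div, div_le_one (log_pos one_lt_two)]
  exact binEntropy_le_log_two

@[simp] lemma binH_zero : binH 0 = 0 := by simp [binH]

@[simp] lemma binH_one : binH 1 = 0 := by simp [binH]

@[simp] lemma binH_one_sub (t : ℝ) : binH (1 - t) = binH t := by
  simp [binH_eq_binEntropy_div]

lemma mul_logb_two_mul (t : ℝ) : t * logb 2 (2 * t) = t + t * logb 2 t := by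
  rcases eq_or_ne t 0 with rfl | ht
  · simp
  · rw [logb_mul two_ne_zero ht, logb_self_eq_one one_lt_two]
    ring

lemma mul_logb_two_mul_add_mul_logb_two_mul (t : ℝ) :
    t * logb 2 (2 * t) + (1 - t) * logb 2 (2 * (1 - t)) = 1 - binH t := by
  rw [mul_logb_two_mul, mul_logb_two_mul, binH]
  ring

lemma hasSum_mul_log_add_mul_log {δ : ℝ} (hδ : |δ| < 1) :
    HasSum (fun m : ℕ => 2 * (δ ^ 2) ^ (m + 1) / ((2 * m + 1) * (2 * m + 2)))
      ((1 + δ) * log (1 + δ) + (1 - δ) * log (1 - δ)) := by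
  have hδ2 : |δ ^ 2| < 1 := by
    rw [abs_pow]; exact pow_lt_one₀ (abs_nonneg δ) hδ two_ne_zero
  obtain ⟨hlt, hgt⟩ := abs_lt.mp hδ
  have hlog : log (1 - δ ^ 2) = log (1 + δ) + log (1 - δ) := by
    rw [← log_mul (by linarith) (by linarith)]; ring_nf
  have hsum : (1 + δ) * log (1 + δ) + (1 - δ) * log (1 - δ)
      = δ * (log (1 + δ) - log (1 - δ)) - -log (1 - δ ^ 2) := by
    rw [hlog]; ring
  rw [hsum]
  refine ((hasSum_log_sub_log_of_abs_lt_one hδ).mul_left δ).sub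
    (hasSum_pow_div_log_of_abs_lt_one hδ2) |>.congr_fun fun m => ?_
  field_simp
  ring

noncomputable def binHCoeff (m : ℕ) : ℝ := 1 / ((2 * m + 1) * (2 * m + 2) * log 2)

lemma binHCoeff_nonneg (m : ℕ) : 0 ≤ binHCoeff m := by
  have := log_pos one_lt_two
  unfold binHCoeff
  positivity

lemma hasSum_one_sub_binH {δ : ℝ} (hδ : |δ| < 1) :
    HasSum (fun m : ℕ => binHCoeff m * (δ ^ 2) ^ (m + 1)) (1 - binH ((1 - δ) / 2)) := by
  obtain ⟨hlt, hgt⟩ := abs_lt.mp hδ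
  have hlog2 := log_pos one_lt_two
  have hval : 1 - binH ((1 - δ) / 2)
      = ((1 + δ) * log (1 + δ) + (1 - δ) * log (1 - δ)) / (2 * log 2) := by
    have h1 : 1 - (1 - δ) / 2 = (1 + δ) / 2 := by ring
    simp only [binH, logb, h1, log_div (by linarith : 1 - δ ≠ 0) two_ne_zero,
      log_div (by linarith : 1 + δ ≠ 0) two_ne_zero]
    field_simp
    ring
  rw [hval]
  refine (hasSum_mul_log_add_mul_log hδ).div_const (2 * log 2) |>.congr_fun fun m => ?_
  unfold binHCoeff
  field_simp

lemma sum_binHCoeff_le_one (s : Finset ℕ) : ∑ m ∈ s, binHCoeff m ≤ 1 := by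
  have hcont : Continuous fun d : ℝ => ∑ m ∈ s, binHCoeff m * (d ^ 2) ^ (m + 1) := by
    fun_prop
  -- let `d → 1⁻` in the partial sums, which are bounded by `1 - binH ((1 - d) / 2) ≤ 1`
  have hlim := (hcont.tendsto 1).mono_left (nhdsWithin_le_nhds (s := Set.Iio 1))
  simp only [one_pow, mul_one] at hlim
  refine le_of_tendsto hlim (Filter.mem_of_superset (Ioo_mem_nhdsLT zero_lt_one) fun d hd => ?_)
  have hd₁ : |d| < 1 := abs_lt.mpr ⟨by linarith [hd.1], hd.2⟩
  calc ∑ m ∈ s, binHCoeff m * (d ^ 2) ^ (m + 1)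
      ≤ 1 - binH ((1 - d) / 2) :=
        sum_le_hasSum s (fun m _ => by have := binHCoeff_nonneg m; positivity)
          (hasSum_one_sub_binH hd₁)
    _ ≤ 1 := by
        have := binH_nonneg (t := (1 - d) / 2) (by linarith [hd.2]) (by linarith [hd.1])
        linarith

lemma one_sub_binH_mul_one_sub_binH_le {δ ε : ℝ} (hδ : |δ| < 1) (hε : |ε| < 1) :
    (1 - binH ((1 - δ) / 2)) * (1 - binH ((1 - ε) / 2)) ≤ 1 - binH ((1 - δ * ε) / 2) := by
  have hδε : |δ * ε| < 1 := by
    rw [abs_mul]; exact mul_lt_one_of_nonneg_of_lt_one_left (abs_nonneg δ) hδ hε.le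
  have hprod := (hasSum_one_sub_binH hδε).congr_fun fun m => by
    rw [mul_pow, mul_pow]
  have hpow {t : ℝ} (ht : |t| < 1) : Antitone fun m : ℕ => (t ^ 2) ^ (m + 1) :=
    fun _ _ h => pow_le_pow_of_le_one (sq_nonneg t)
      (by rw [← sq_abs]; nlinarith [abs_nonneg t]) (Nat.succ_le_succ h)
  have hmono := (hpow hδ).monovary (hpow hε)
  refine le_of_tendsto_of_tendsto'
    ((hasSum_one_sub_binH hδ).tendsto_sum_nat.mul (hasSum_one_sub_binH hε).tendsto_sum_nat)
    hprod.tendsto_sum_nat fun n => ?_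
  have hc : ∀ m ∈ range n, 0 ≤ binHCoeff m := fun m _ => binHCoeff_nonneg m
  calc _ ≤ (∑ m ∈ range n, binHCoeff m)
        * ∑ m ∈ range n, binHCoeff m * ((δ ^ 2) ^ (m + 1) * (ε ^ 2) ^ (m + 1)) :=
        hmono.sum_mul_sum_le_sum_mul_sum _ hc
    _ ≤ _ := mul_le_of_le_one_left (sum_nonneg fun m hm => by have := hc m hm; positivity)
        (sum_binHCoeff_le_one _)

def bconv (a b : ℝ) : ℝ := a * (1 - b) + (1 - a) * b

lemma one_sub_binH_mul_one_sub_binH_le_bconv {a b : ℝ} (ha₀ : 0 ≤ a) (ha₁ : a ≤ 1)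
    (hb₀ : 0 ≤ b) (hb₁ : b ≤ 1) : (1 - binH a) * (1 - binH b) ≤ 1 - binH (bconv a b) := by
  rcases ha₀.eq_or_lt with rfl | ha₀
  · simp [bconv]
  rcases ha₁.eq_or_lt with rfl | ha₁
  · simp [bconv]
  rcases hb₀.eq_or_lt with rfl | hb₀
  · simp [bconv]
  rcases hb₁.eq_or_lt with rfl | hb₁
  · simp [bconv]
  have hδ : (1 - (1 - 2 * a)) / 2 = a := by ring
  have hε : (1 - (1 - 2 * b)) / 2 = b := by ring
  have hδε : (1 - (1 - 2 * a) * (1 - 2 * b)) / 2 = bconv a b := by unfold bconv; ring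
  simpa only [hδ, hε, hδε] using one_sub_binH_mul_one_sub_binH_le (δ := 1 - 2 * a)
    (ε := 1 - 2 * b) (abs_lt.mpr ⟨by linarith, by linarith⟩)
    (abs_lt.mpr ⟨by linarith, by linarith⟩)

-- `(a + b) · D((a, b)/(a + b) ‖ uniform)` in bits: the summand of `I(V;X)` for one value `v`
-- when `(P(V = v, X = 0), P(V = v, X = 1)) = (a, b)` and `X` is uniform.
noncomputable def klToUniform (a b : ℝ) : ℝ :=
  a * logb 2 (a / ((a + b) * (1 / 2))) + b * logb 2 (b / ((a + b) * (1 / 2)))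

lemma klToUniform_eq {a b : ℝ} (ha : 0 ≤ a) (hb : 0 ≤ b) :
    klToUniform a b = (a + b) * (1 - binH (a / (a + b))) := by
  rcases (add_nonneg ha hb).eq_or_lt with hr | hr
  · obtain ⟨rfl, rfl⟩ : a = 0 ∧ b = 0 := ⟨by linarith, by linarith⟩
    simp [klToUniform]
  have hb' : b / (a + b) = 1 - a / (a + b) := by field_simp; ring
  have h2a : a / ((a + b) * (1 / 2)) = 2 * (a / (a + b)) := by field_simp
  have h2b : b / ((a + b) * (1 / 2)) = 2 * (1 - a / (a + b)) := by rw [← hb']; field_simp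
  rw [klToUniform, h2a, h2b, ← mul_logb_two_mul_add_mul_logb_two_mul]
  field_simp
  ring

lemma one_sub_mul_klToUniform_le {p e a b : ℝ} (hp₀ : 0 ≤ p) (hp₁ : p ≤ 1)
    (he : binH p ≤ e) (ha : 0 ≤ a) (hb : 0 ≤ b) :
    (1 - e) * klToUniform a b ≤ klToUniform (a * (1 - p) + b * p) (a * p + b * (1 - p)) := by
  have hsum : a * (1 - p) + b * p + (a * p + b * (1 - p)) = a + b := by ring
  rw [klToUniform_eq ha hb, klToUniform_eq (by positivity) (by nlinarith), hsum]
  rcases (add_nonneg ha hb).eq_or_lt with hr | hr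
  · simp [← hr]
  set α := a / (a + b)
  have hα₀ : 0 ≤ α := by positivity
  have hα₁ : α ≤ 1 := div_le_one_of_le₀ (by linarith) hr.le
  have hconv : (a * (1 - p) + b * p) / (a + b) = bconv α p := by
    unfold α bconv; field_simp; ring
  have hgain : 0 ≤ 1 - binH α := by linarith [binH_le_one α]
  rw [hconv]
  calc (1 - e) * ((a + b) * (1 - binH α))
      ≤ (1 - binH p) * ((a + b) * (1 - binH α)) := by gcongr
    _ = (a + b) * ((1 - binH α) * (1 - binH p)) := by ring
    _ ≤ (a + b) * (1 - binH (bconv α p)) := by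
        gcongr; exact one_sub_binH_mul_one_sub_binH_le_bconv hα₀ hα₁ hp₀ hp₁

lemma mutualInfo_comp_channel {V X Y : Type*} [Fintype V] [Fintype X] [Fintype Y]
    (q : V → X → ℝ) (W : X → Y → ℝ) (hW : ∀ x, ∑ y, W x y = 1) :
    mutualInfo (fun v y => ∑ x, q v x * W x y) = ∑ v, ∑ y, (∑ x, q v x * W x y) *
      logb 2 ((∑ x, q v x * W x y) / ((∑ x, q v x) * ∑ x, (∑ v', q v' x) * W x y)) := by
  have hrow (v : V) : ∑ y, ∑ x, q v x * W x y = ∑ x, q v x := by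
    rw [sum_comm]; simp [← mul_sum, hW]
  have hcol (y : Y) : ∑ v, ∑ x, q v x * W x y = ∑ x, (∑ v, q v x) * W x y := by
    rw [sum_comm]; simp [sum_mul]
  simp only [mutualInfo, hrow, hcol]

lemma sum_becCh_mul_logb (e : ℝ) (r : Fin 2 → ℝ) :
    ∑ y, (∑ x, r x * becCh e x y) * logb 2 ((∑ x, r x * becCh e x y)
      / ((∑ x, r x) * ∑ x, 1 / 2 * becCh e x y)) = (1 - e) * klToUniform (r 0) (r 1) := by
  have herase : logb 2 ((r 0 * e + r 1 * e) / ((r 0 + r 1) * (1 / 2 * e + 1 / 2 * e))) = 0 := by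
    rw [show (r 0 + r 1) * (1 / 2 * e + 1 / 2 * e) = r 0 * e + r 1 * e by ring]
    rcases eq_or_ne (r 0 * e + r 1 * e) 0 with h | h <;> simp [h]
  simp only [Fin.sum_univ_two, Fin.sum_univ_three, becCh]
  norm_num
  rw [herase, mul_zero, add_zero]
  rcases eq_or_ne (1 - e) 0 with he | he
  · simp [he]
  have hcancel (x : ℝ) :
      x * (1 - e) / ((r 0 + r 1) * (1 / 2 * (1 - e))) = x / ((r 0 + r 1) * (1 / 2)) := by
    rw [← mul_assoc, mul_div_mul_right _ _ he]
  rw [hcancel, hcancel, klToUniform]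
  ring

lemma sum_bscCh_mul_logb (p : ℝ) (r : Fin 2 → ℝ) :
    ∑ y, (∑ x, r x * bscCh p x y) * logb 2 ((∑ x, r x * bscCh p x y)
      / ((∑ x, r x) * ∑ x, 1 / 2 * bscCh p x y))
      = klToUniform (r 0 * (1 - p) + r 1 * p) (r 0 * p + r 1 * (1 - p)) := by
  have hsum : r 0 + r 1 = r 0 * (1 - p) + r 1 * p + (r 0 * p + r 1 * (1 - p)) := by ring
  have h₀ : 1 / 2 * (1 - p) + 1 / 2 * p = 1 / 2 := by ring
  have h₁ : 1 / 2 * p + 1 / 2 * (1 - p) = 1 / 2 := by ring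
  norm_num [Fin.sum_univ_two, bscCh]
  rw [h₀, h₁, hsum]
  rfl

lemma sum_becCh (e : ℝ) (x : Fin 2) : ∑ y, becCh e x y = 1 := by
  fin_cases x <;> simp [Fin.sum_univ_three, becCh]

lemma sum_bscCh (p : ℝ) (x : Fin 2) : ∑ y, bscCh p x y = 1 := by
  fin_cases x <;> simp [Fin.sum_univ_two, bscCh]

theorem stmt19_general (p e : ℝ) (hp0 : 0 < p) (hp1 : p < 1 / 2) (he0 : binH p < e) :
    ∀ (k : ℕ) (q : Fin k → Fin 2 → ℝ), (∀ v x, 0 ≤ q v x) →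
      (∀ x, ∑ v, q v x = 1 / 2) →
      mutualInfo (fun v y₂ => ∑ x, q v x * becCh e x y₂)
        ≤ mutualInfo (fun v y₁ => ∑ x, q v x * bscCh p x y₁) := by
  intro k q hq hqs
  rw [mutualInfo_comp_channel _ _ (sum_becCh e), mutualInfo_comp_channel _ _ (sum_bscCh p)]
  simp only [hqs, sum_becCh_mul_logb, sum_bscCh_mul_logb]
  exact sum_le_sum fun v _ =>
    one_sub_mul_klToUniform_le hp0.le (by linarith) he0.le (hq v 0) (hq v 1)

/-- For the BSC(p)/BEC(e) broadcast channel with H(p) < e ≤ 1, every Markov chain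
V → X → (Y₁,Y₂) with X uniform satisfies I(V;Y₁) ≥ I(V;Y₂). -/
theorem stmt19 (p e : ℝ) (hp0 : 0 < p) (hp1 : p < 1 / 2) (he0 : binH p < e) (he1 : e ≤ 1) :
    ∀ (k : ℕ) (q : Fin k → Fin 2 → ℝ), (∀ v x, 0 ≤ q v x) →
      (∀ x, ∑ v, q v x = 1 / 2) →
      mutualInfo (fun v y₂ => ∑ x, q v x * becCh e x y₂)
        ≤ mutualInfo (fun v y₁ => ∑ x, q v x * bscCh p x y₁) :=
  stmt19_general p e hp0 hp1 he0
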